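/- arXiv:2111.01359 — 5 statements merged into one kernel-verified Lean document; each statement's English description precedes it below -/
import Mathlib

section
/- Let n ≥ 2 and for a ∈ {1,…,n} let A_a be the affine span in ℝⁿ of the standard basis vectors {e_i : i ≠ a}. Then the reflection (across the affine subspace A_a, in the sense of Euclidean geometry) of the vertex e_a equals the vector whose a-th coordinate is −1 and whose every other coordinate is 2/(n−1). -/
/-- The affine span in `ℝⁿ` of the standard basis vectors `{eᵢ : i ≠ a}`
(the facet of the standard simplex opposite the vertex `e_a`). -/
noncomputable def oppFacetSpan (n : ℕ) (a : Fin n) :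
    AffineSubspace ℝ (EuclideanSpace ℝ (Fin n)) :=
  affineSpan ℝ {x | ∃ i : Fin n, i ≠ a ∧ x = EuclideanSpace.single i 1}

/-- For `n ≥ 2`, the Euclidean reflection of the vertex `e_a` across the affine span of
the other standard basis vectors is the vector whose `a`-th coordinate is `-1` and whose
every other coordinate is `2/(n-1)`.  (The `Nonempty` instance hypothesis holds since
`n ≥ 2` makes the spanning set nonempty.) -/
theorem reflection_vertex_eq (n : ℕ) (hn : 2 ≤ n) (a : Fin n)
    [Nonempty (oppFacetSpan n a)] :
    EuclideanGeometry.reflection (oppFacetSpan n a) (EuclideanSpace.single a 1) =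
      fun i => if i = a then (-1 : ℝ) else 2 / ((n : ℝ) - 1) := by
  classical
  set p : EuclideanSpace ℝ (Fin n) := EuclideanSpace.single a 1 with hp
  set q : EuclideanSpace ℝ (Fin n) :=
    WithLp.toLp 2 (fun i => if i = a then 0 else 1 / ((n : ℝ) - 1)) with hq
  have hn1 : (n : ℝ) - 1 ≠ 0 := by
    have : (2 : ℝ) ≤ n := by exact_mod_cast hn
    linarith
  have hcard : Fintype.card {i : Fin n // i ≠ a} = n - 1 := by
    simp [Fintype.card_subtype_compl]
  -- q is in the affine span
  have hqmem : q ∈ oppFacetSpan n a := by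
    have h := affineCombination_mem_affineSpan (k := ℝ)
      (s := (Finset.univ : Finset {i : Fin n // i ≠ a}))
      (w := fun _ => 1 / ((n : ℝ) - 1))
      (by
        rw [Finset.sum_const]
        simp only [Finset.card_univ, hcard, nsmul_eq_mul]
        rw [mul_one_div, div_eq_one_iff_eq hn1]
        have : (1 : ℕ) ≤ n := by omega
        push_cast [Nat.cast_sub this]
        ring)
      (fun i : {i : Fin n // i ≠ a} => (EuclideanSpace.single i.1 1 : EuclideanSpace ℝ (Fin n)))
    have hrange : Set.range (fun i : {i : Fin n // i ≠ a} =>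
        (EuclideanSpace.single i.1 1 : EuclideanSpace ℝ (Fin n))) =
        {x | ∃ i : Fin n, i ≠ a ∧ x = EuclideanSpace.single i 1} := by
      ext x
      constructor
      · rintro ⟨⟨i, hi⟩, rfl⟩; exact ⟨i, hi, rfl⟩
      · rintro ⟨i, hi, rfl⟩; exact ⟨⟨i, hi⟩, rfl⟩
    rw [hrange] at h
    have hcomb : (Finset.univ : Finset {i : Fin n // i ≠ a}).affineCombination ℝ
        (fun i : {i : Fin n // i ≠ a} => (EuclideanSpace.single i.1 1 : EuclideanSpace ℝ (Fin n)))
        (fun _ => 1 / ((n : ℝ) - 1)) = q := by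
      rw [Finset.affineCombination_eq_linear_combination]
      · ext j
        have : ((∑ i : {i : Fin n // i ≠ a}, (1 / ((n : ℝ) - 1)) •
            (EuclideanSpace.single i.1 1 : EuclideanSpace ℝ (Fin n))) : EuclideanSpace ℝ (Fin n)) j
            = ∑ i : {i : Fin n // i ≠ a}, (1 / ((n : ℝ) - 1)) *
              (if j = i.1 then (1:ℝ) else 0) := by
          rw [WithLp.ofLp_sum, Finset.sum_apply]
          congr 1; ext i
          simp [EuclideanSpace.single_apply]
        rw [this]
        by_cases hj : j = a
        · subst hj
          rw [Finset.sum_eq_zero]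
          · simp [hq]
          · rintro ⟨i, hi⟩ _
            simp [Ne.symm hi]
        · rw [Finset.sum_eq_single ⟨j, hj⟩]
          · simp [hq, hj]
          · rintro ⟨i, hi⟩ _ hne
            have : j ≠ i := by
              intro h'; exact hne (by simp [h'])
            simp [this]
          · intro h; exact absurd (Finset.mem_univ _) h
      · rw [Finset.sum_const]
        simp only [Finset.card_univ, hcard, nsmul_eq_mul]
        rw [mul_one_div, div_eq_one_iff_eq hn1]
        have : (1 : ℕ) ≤ n := by omega
        push_cast [Nat.cast_sub this]
        ring
    rwa [hcomb] at h
  -- q - p is orthogonal to the direction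
  have hdir : (oppFacetSpan n a).direction =
      vectorSpan ℝ {x : EuclideanSpace ℝ (Fin n) | ∃ i : Fin n, i ≠ a ∧ x = EuclideanSpace.single i 1} := by
    rw [oppFacetSpan, direction_affineSpan]
  have horth : q -ᵥ p ∈ (oppFacetSpan n a).directionᗮ := by
    rw [hdir]
    rw [Submodule.mem_orthogonal]
    intro u hu
    rw [vectorSpan_def] at hu
    induction hu using Submodule.span_induction with
    | mem u hu =>
      obtain ⟨x, hx, y, hy, rfl⟩ := hu
      obtain ⟨i, hi, rfl⟩ := hx
      obtain ⟨j, hj, rfl⟩ := hy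
      have hval : ∀ k : Fin n, k ≠ a → (q -ᵥ p) k = 1 / ((n : ℝ) - 1) := by
        intro k hk
        change q k - p k = _
        simp [hq, hp, hk, EuclideanSpace.single_apply, Ne.symm hk]
      have : (inner ℝ ((EuclideanSpace.single i 1 : EuclideanSpace ℝ (Fin n)) -ᵥ
          EuclideanSpace.single j 1) (q -ᵥ p) : ℝ) =
          (q -ᵥ p) i - (q -ᵥ p) j := by
        rw [vsub_eq_sub, inner_sub_left, EuclideanSpace.inner_single_left,
          EuclideanSpace.inner_single_left]
        simp
      rw [this, hval i hi, hval j hj, sub_self]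
    | zero => simp
    | add u v _ _ hu hv => rw [inner_add_left, hu, hv, add_zero]
    | smul c u _ hu => rw [inner_smul_left, hu, mul_zero]
  -- hence q is the orthogonal projection of p
  have hproj : (↑(EuclideanGeometry.orthogonalProjection (oppFacetSpan n a) p) :
      EuclideanSpace ℝ (Fin n)) = q := by
    have hmem : q ∈ ((oppFacetSpan n a : Set (EuclideanSpace ℝ (Fin n))) ∩
        AffineSubspace.mk' p (oppFacetSpan n a).directionᗮ) :=
      ⟨hqmem, (AffineSubspace.mem_mk').2 horth⟩
    rw [EuclideanGeometry.inter_eq_singleton_orthogonalProjection p] at hmem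
    exact hmem.symm
  rw [EuclideanGeometry.reflection_apply', hproj]
  funext j
  change (q -ᵥ p) j + q j = _
  by_cases hj : j = a
  · subst hj
    simp [hq, hp, EuclideanSpace.single_apply]
  · have : p j = 0 := by simp [hp, EuclideanSpace.single_apply, hj]
    change q j - p j + q j = _
    rw [this]
    simp only [hq, if_neg hj]
    ring
end

section
/- Let n ≥ 2 and let N_k = M_1 · M_2 ⋯ M_k for 1 ≤ k ≤ n (the product over the list ⟨1,2,…,k⟩). Then for every such k, the (1,j)-entry of N_k is strictly negative whenever j ≤ k, and equals 0 whenever j > k. In particular the first row of N_k contains no positive entries. -/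
/-- The reflection matrix `M_a` (0-indexed): the `n × n` real matrix equal to the
identity except that its `a`-th column has `-1` in the `a`-th entry and `2/(n-1)`
in every other entry. -/
noncomputable def reflMat (n : ℕ) (a : Fin n) : Matrix (Fin n) (Fin n) ℝ :=
  fun i j => if j = a then (if i = a then -1 else 2 / ((n : ℝ) - 1)) else if i = j then 1 else 0

/-- `N_k = M_1 ⬝ M_2 ⬝ ⋯ ⬝ M_k` (0-indexed: the product over the first `k` indices). -/
noncomputable def chainMat (n k : ℕ) : Matrix (Fin n) (Fin n) ℝ :=
  ((((List.finRange n).take k)).map (reflMat n)).prod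

lemma chainMat_zero (n : ℕ) : chainMat n 0 = 1 := by simp [chainMat]

lemma chainMat_succ (n k : ℕ) (h : k < n) :
    chainMat n (k+1) = chainMat n k * reflMat n ⟨k, h⟩ := by
  unfold chainMat
  rw [List.take_succ]
  have hget : (List.finRange n)[k]? = some ⟨k, h⟩ := by
    rw [List.getElem?_eq_getElem (by simpa using h)]
    simp
  rw [hget]
  simp

lemma aux (n : ℕ) (hn : 2 ≤ n) : ∀ k : ℕ, 1 ≤ k → k ≤ n →
    ∀ j : Fin n, ((j : ℕ) < k → chainMat n k ⟨0, by omega⟩ j < 0) ∧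
      (k ≤ (j : ℕ) → chainMat n k ⟨0, by omega⟩ j = 0) := by
  have hc : (0:ℝ) < 2 / ((n : ℝ) - 1) := by
    apply div_pos (by norm_num)
    have : (2:ℝ) ≤ (n:ℝ) := by exact_mod_cast hn
    linarith
  intro k hk1
  induction k, hk1 using Nat.le_induction with
  | base =>
    intro _ j
    rw [chainMat_succ n 0 (by omega), chainMat_zero, one_mul]
    constructor
    · intro hj
      have hj0 : j = ⟨0, by omega⟩ := Fin.ext (by simp; omega)
      simp [reflMat, hj0]
    · intro hj
      have hne : j ≠ ⟨0, by omega⟩ := by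
        intro h; rw [h] at hj; simp at hj
      have hne' : (⟨0, by omega⟩ : Fin n) ≠ j := fun h => hne h.symm
      simp [reflMat, hne, hne']
  | succ k hk1 ih =>
    intro hkn j
    have hkn' : k < n := by omega
    have ih' := ih (by omega)
    rw [chainMat_succ n k hkn']
    set z : Fin n := ⟨0, by omega⟩ with hz
    set a : Fin n := ⟨k, hkn'⟩ with ha
    rw [Matrix.mul_apply]
    by_cases hja : j = a
    · subst hja
      constructor
      · intro _
        have hsum : ∀ m : Fin n, chainMat n k z m * reflMat n a m a
            = if m = a then 0 else (2 / ((n:ℝ)-1)) * chainMat n k z m := by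
          intro m
          by_cases hm : m = a
          · subst hm
            simp [reflMat, (ih' a).2 (by simp [ha])]
          · simp [reflMat, hm, mul_comm]
        rw [Finset.sum_congr rfl (fun m _ => hsum m)]
        have hzmem : z ∈ Finset.univ := Finset.mem_univ z
        rw [← Finset.add_sum_erase _ _ hzmem]
        have hza : z ≠ a := by
          intro h
          have : (0:ℕ) = k := congrArg Fin.val h
          omega
        have h1 : (if z = a then 0 else (2 / ((n:ℝ)-1)) * chainMat n k z z) < 0 := by
          rw [if_neg hza]
          exact mul_neg_of_pos_of_neg hc ((ih' z).1 (by simp [hz]; omega))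
        have h2 : ∑ m ∈ Finset.univ.erase z,
            (if m = a then 0 else (2 / ((n:ℝ)-1)) * chainMat n k z m) ≤ 0 := by
          apply Finset.sum_nonpos
          intro m _
          by_cases hm : m = a
          · simp [hm]
          · rw [if_neg hm]
            rcases lt_or_ge ((m:ℕ)) k with hmk | hmk
            · exact le_of_lt (mul_neg_of_pos_of_neg hc ((ih' m).1 hmk))
            · rw [(ih' m).2 hmk, mul_zero]
        linarith
      · intro hj
        exfalso
        simp [ha] at hj
    · have hsum : ∀ m : Fin n, chainMat n k z m * reflMat n a m j
          = if m = j then chainMat n k z m else 0 := by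
        intro m
        by_cases hm : m = j
        · subst hm
          simp [reflMat, hja]
        · have : m ≠ j := hm
          simp [reflMat, hja, Ne.symm hm, hm]
      rw [Finset.sum_congr rfl (fun m _ => hsum m), Finset.sum_ite_eq' Finset.univ j]
      simp only [Finset.mem_univ, if_true]
      have hjk : (j:ℕ) ≠ k := by
        intro h; exact hja (by ext; simp [ha, h])
      constructor
      · intro hj
        exact (ih' j).1 (by omega)
      · intro hj
        exact (ih' j).2 (by omega)


/-- For `n ≥ 2` and `1 ≤ k ≤ n`, the `(1,j)`-entry of `N_k = M_1 ⋯ M_k` is strictly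
negative when `j ≤ k` and zero when `j > k`; in particular the first row of `N_k`
contains no positive entries. (0-indexed: row `0`, and `j ≤ k` becomes `(j : ℕ) < k`.) -/
theorem firstRow_chainMat_nonpos (n : ℕ) (hn : 2 ≤ n) (k : ℕ) (hk1 : 1 ≤ k) (hkn : k ≤ n) :
    (∀ j : Fin n,
      ((j : ℕ) < k → chainMat n k ⟨0, by omega⟩ j < 0) ∧
      (k ≤ (j : ℕ) → chainMat n k ⟨0, by omega⟩ j = 0)) ∧
    (∀ j : Fin n, chainMat n k ⟨0, by omega⟩ j ≤ 0) := by
  have h := aux n hn k hk1 hkn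
  refine ⟨h, fun j => ?_⟩
  rcases lt_or_ge ((j:ℕ)) k with hj | hj
  · exact le_of_lt ((h j).1 hj)
  · exact le_of_eq ((h j).2 hj)
end

section
/- Let n ≥ 2, let Δ ⊂ ℝⁿ be the standard simplex with centroid c = (1/n,…,1/n), let H = {x ∈ ℝⁿ : ∑_i x_i = 1}, and let φ₁, φ₂ be isometries of ℝⁿ with φ₁(H) = φ₂(H). If the distance between φ₁(c) and φ₂(c) is less than 2/√(n(n−1)), then the images φ₁(Δ) and φ₂(Δ) have a common point. (This is the forced-intersection half of the centroid lemma: two facets of an unfolding, lying in a common hyperplane, must intersect when their centroids are closer than 2/√(n(n−1)).) -/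
/-- Key estimate: a point of the hyperplane `∑ xᵢ = 1` within distance `1/√(n(n-1))`
of the centroid has all coordinates nonnegative. -/
lemma aux_mem_simplex (n : ℕ) (hn : 2 ≤ n) (x : EuclideanSpace ℝ (Fin n))
    (hx : ∑ i, x i = 1)
    (hd : dist x (WithLp.toLp 2 (fun _ => 1 / (n : ℝ)) : EuclideanSpace ℝ (Fin n)) < 1 / Real.sqrt ((n : ℝ) * ((n : ℝ) - 1))) :
    ∀ i, 0 ≤ x i := by
  have hn1 : (1 : ℝ) ≤ (n : ℝ) - 1 := by
    have : (2 : ℝ) ≤ n := by exact_mod_cast hn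
    linarith
  have hnp : (0 : ℝ) < n := by positivity
  have hprod : (0 : ℝ) < (n : ℝ) * ((n : ℝ) - 1) := by nlinarith
  -- dist squared
  have hdist : dist x (WithLp.toLp 2 (fun _ => 1 / (n : ℝ)) : EuclideanSpace ℝ (Fin n))
      = Real.sqrt (∑ i, (x i - 1 / (n : ℝ)) ^ 2) := by
    rw [EuclideanSpace.dist_eq]
    congr 1
    refine Finset.sum_congr rfl fun i _ => ?_
    rw [Real.dist_eq, sq_abs]
  have hsq : ∑ i, (x i - 1 / (n : ℝ)) ^ 2 < 1 / ((n : ℝ) * ((n : ℝ) - 1)) := by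
    have hS0 : 0 ≤ ∑ i, (x i - 1 / (n : ℝ)) ^ 2 :=
      Finset.sum_nonneg fun i _ => sq_nonneg _
    have hr : Real.sqrt (∑ i, (x i - 1 / (n : ℝ)) ^ 2)
        < 1 / Real.sqrt ((n : ℝ) * ((n : ℝ) - 1)) := by rw [← hdist]; exact hd
    have hrsq : (1 / Real.sqrt ((n : ℝ) * ((n : ℝ) - 1))) ^ 2
        = 1 / ((n : ℝ) * ((n : ℝ) - 1)) := by
      rw [div_pow, one_pow, Real.sq_sqrt hprod.le]
    calc ∑ i, (x i - 1 / (n : ℝ)) ^ 2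
        = Real.sqrt (∑ i, (x i - 1 / (n : ℝ)) ^ 2) ^ 2 := (Real.sq_sqrt hS0).symm
      _ < (1 / Real.sqrt ((n : ℝ) * ((n : ℝ) - 1))) ^ 2 := by
          apply pow_lt_pow_left₀ hr (Real.sqrt_nonneg _)
          norm_num
      _ = 1 / ((n : ℝ) * ((n : ℝ) - 1)) := hrsq
  intro j
  by_contra hj
  push_neg at hj
  set a := x j with ha
  set s := Finset.univ.erase j with hs
  have hcard : (s.card : ℝ) = (n : ℝ) - 1 := by
    rw [hs, Finset.card_erase_of_mem (Finset.mem_univ j), Finset.card_univ, Fintype.card_fin]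
    have : 1 ≤ n := by omega
    push_cast [Nat.cast_sub this]
    ring
  have hCS : (∑ i ∈ s, (x i - 1 / (n : ℝ))) ^ 2
      ≤ ((n : ℝ) - 1) * ∑ i ∈ s, (x i - 1 / (n : ℝ)) ^ 2 := by
    rw [← hcard]
    exact sq_sum_le_card_mul_sum_sq
  have hsum0 : ∑ i, (x i - 1 / (n : ℝ)) = 0 := by
    rw [Finset.sum_sub_distrib, hx, Finset.sum_const, Finset.card_univ, Fintype.card_fin]
    field_simp; simp [hnp.ne']
  have hssum : ∑ i ∈ s, (x i - 1 / (n : ℝ)) = 1 / (n : ℝ) - a := by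
    have h2 : (x j - 1 / (n : ℝ)) + ∑ i ∈ s, (x i - 1 / (n : ℝ))
        = ∑ i, (x i - 1 / (n : ℝ)) :=
      Finset.add_sum_erase Finset.univ (fun i => x i - 1 / (n : ℝ)) (Finset.mem_univ j)
    rw [hsum0] at h2
    simp only [← ha] at h2
    linarith
  have hsplit : ∑ i, (x i - 1 / (n : ℝ)) ^ 2
      = (a - 1 / (n : ℝ)) ^ 2 + ∑ i ∈ s, (x i - 1 / (n : ℝ)) ^ 2 :=
    (Finset.add_sum_erase Finset.univ (fun i => (x i - 1 / (n : ℝ)) ^ 2) (Finset.mem_univ j)).symm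
  rw [hssum] at hCS
  rw [hsplit] at hsq
  have hpos : (0 : ℝ) < (n : ℝ) - 1 := by linarith
  have hPinv : ((n : ℝ) - 1) * (1 / ((n : ℝ) * ((n : ℝ) - 1))) = 1 / (n : ℝ) := by
    field_simp; try ring
  have hu : 1 / (n : ℝ) < 1 / (n : ℝ) - a := by linarith
  have hu0 : (0 : ℝ) < 1 / (n : ℝ) := by positivity
  have husq : (1 / (n : ℝ)) ^ 2 < (1 / (n : ℝ) - a) ^ 2 := by nlinarith
  have h1n : (n : ℝ) * (1 / (n : ℝ)) ^ 2 = 1 / (n : ℝ) := by field_simp; try ring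
  nlinarith [mul_lt_mul_of_pos_left hsq hpos, mul_lt_mul_of_pos_left husq hnp]

/-- If two isometric copies of the standard simplex `Δ ⊆ ℝⁿ` lie in a common hyperplane
(the two isometries map the hyperplane `H = {∑ xᵢ = 1}` to the same hyperplane) and their
centroids are closer than `2/√(n(n-1))` (twice the inradius of `Δ`), then the two copies
have a common point. -/
theorem simplex_images_intersect_of_centroids_close (n : ℕ) (hn : 2 ≤ n)
    (Δ H : Set (EuclideanSpace ℝ (Fin n)))
    (hΔ : Δ = {x : EuclideanSpace ℝ (Fin n) | (∀ i, 0 ≤ x i) ∧ ∑ i, x i = 1})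
    (hH : H = {x : EuclideanSpace ℝ (Fin n) | ∑ i, x i = 1})
    (c : EuclideanSpace ℝ (Fin n)) (hc : c = WithLp.toLp 2 (fun _ => 1 / (n : ℝ)))
    (φ₁ φ₂ : EuclideanSpace ℝ (Fin n) ≃ᵢ EuclideanSpace ℝ (Fin n))
    (hplane : φ₁ '' H = φ₂ '' H)
    (h : dist (φ₁ c) (φ₂ c) < 2 / Real.sqrt ((n : ℝ) * ((n : ℝ) - 1))) :
    ((φ₁ '' Δ) ∩ (φ₂ '' Δ)).Nonempty := by
  have hn0 : (n : ℝ) ≠ 0 := by positivity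
  have hcH : c ∈ H := by
    rw [hH, hc]
    simp [Finset.sum_const, Finset.card_univ]
    field_simp; try ring
  -- convexity of H
  have hHconv : Convex ℝ H := by
    rw [hH]
    intro x hx y hy a b ha hb hab
    simp only [Set.mem_setOf_eq] at *
    have : ∀ i, (a • x + b • y) i = a * x i + b * y i := by
      intro i; simp [smul_eq_mul]
    simp only [this, Finset.sum_add_distrib, ← Finset.mul_sum, hx, hy]
    linarith
  have hPconv : Convex ℝ (φ₁ '' H) := by
    have := hHconv.affine_image (φ₁.toRealAffineIsometryEquiv.toAffineMap)
    simpa using this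
  set m := midpoint ℝ (φ₁ c) (φ₂ c) with hm
  have hm1 : φ₁ c ∈ φ₁ '' H := ⟨c, hcH, rfl⟩
  have hm2 : φ₂ c ∈ φ₁ '' H := by rw [hplane]; exact ⟨c, hcH, rfl⟩
  have hmP : m ∈ φ₁ '' H := hPconv.segment_subset hm1 hm2 (midpoint_mem_segment _ _)
  have hkey : ∀ (φ : EuclideanSpace ℝ (Fin n) ≃ᵢ EuclideanSpace ℝ (Fin n)),
      m ∈ φ '' H → dist m (φ c) < 1 / Real.sqrt ((n : ℝ) * ((n : ℝ) - 1)) → m ∈ φ '' Δ := by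
    intro φ hmem hdist
    obtain ⟨y, hyH, hym⟩ := hmem
    refine ⟨y, ?_, hym⟩
    rw [hH, Set.mem_setOf_eq] at hyH
    have hdy : dist y c < 1 / Real.sqrt ((n : ℝ) * ((n : ℝ) - 1)) := by
      rw [← φ.dist_eq y c, hym]; exact hdist
    rw [hΔ]
    exact ⟨aux_mem_simplex n hn y hyH (by rwa [← hc]), hyH⟩
  have hd1 : dist m (φ₁ c) < 1 / Real.sqrt ((n : ℝ) * ((n : ℝ) - 1)) := by
    rw [hm, dist_midpoint_left]
    have h2 : ‖(2:ℝ)‖ = 2 := by norm_num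
    rw [h2]
    have h3 : 2 / Real.sqrt ((n : ℝ) * ((n : ℝ) - 1))
        = 2 * (1 / Real.sqrt ((n : ℝ) * ((n : ℝ) - 1))) := by ring
    rw [h3] at h
    linarith
  have hd2 : dist m (φ₂ c) < 1 / Real.sqrt ((n : ℝ) * ((n : ℝ) - 1)) := by
    rw [hm, dist_midpoint_right]
    have h2 : ‖(2:ℝ)‖ = 2 := by norm_num
    rw [h2]
    have h3 : 2 / Real.sqrt ((n : ℝ) * ((n : ℝ) - 1))
        = 2 * (1 / Real.sqrt ((n : ℝ) * ((n : ℝ) - 1))) := by ring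
    rw [h3] at h
    linarith
  exact ⟨m, hkey φ₁ hmP hd1, hkey φ₂ (hplane ▸ hmP) hd2⟩
end

section
/- In the hypercube graph Q₄, every path that cannot be extended at either end (i.e., every vertex adjacent to either endpoint already lies on the path) contains at least nine vertices. -/
/-- The hypercube graph `Q₄`: vertices are functions `Fin 4 → Bool`, adjacent iff they
differ in exactly one coordinate. -/
def hypercubeQ4 : SimpleGraph (Fin 4 → Bool) where
  Adj v w := (Finset.univ.filter fun i => v i ≠ w i).card = 1
  symm := by
    constructor
    intro v w h
    simpa [ne_comm] using h
  loopless := by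
    constructor
    intro v h
    simp at h

instance : DecidableRel hypercubeQ4.Adj :=
  fun v w => decidable_of_iff ((Finset.univ.filter fun i => v i ≠ w i).card = 1) Iff.rfl

/-- Parity of a vertex of the hypercube. -/
def par (x : Fin 4 → Bool) : Bool := xor (x 0) (xor (x 1) (xor (x 2) (x 3)))

lemma adj_par : ∀ x y, hypercubeQ4.Adj x y → par y = !par x := by decide

lemma card_nbhd : ∀ u : Fin 4 → Bool, (Finset.univ.filter (hypercubeQ4.Adj u)).card = 4 := by
  decide

/-- Translation by `t` (pointwise xor). -/
def trl (t x : Fin 4 → Bool) : Fin 4 → Bool := fun i => xor (x i) (t i)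

lemma adj_trl (t x y : Fin 4 → Bool) :
    hypercubeQ4.Adj (trl t x) (trl t y) ↔ hypercubeQ4.Adj x y := by
  show (Finset.univ.filter fun i => xor (x i) (t i) ≠ xor (y i) (t i)).card = 1 ↔
    (Finset.univ.filter fun i => x i ≠ y i).card = 1
  have : ∀ i : Fin 4, (xor (x i) (t i) ≠ xor (y i) (t i)) ↔ (x i ≠ y i) := by
    intro i; cases x i <;> cases y i <;> cases t i <;> simp
  rw [Finset.filter_congr fun i _ => this i]

lemma trl_inj (t : Fin 4 → Bool) {x y : Fin 4 → Bool} (h : trl t x = trl t y) : x = y := by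
  funext i
  have key : ∀ a b c : Bool, xor a c = xor b c → a = b := by decide
  exact key _ _ _ (congrFun h i)

lemma trl_self (t : Fin 4 → Bool) : trl t t = fun _ => false := by
  funext i; simp [trl]

set_option maxHeartbeats 4000000 in
lemma key0 : ∀ v x1 x2 x3 : Fin 4 → Bool,
    hypercubeQ4.Adj (fun _ => false) v → hypercubeQ4.Adj (fun _ => false) x1 →
    hypercubeQ4.Adj (fun _ => false) x3 → hypercubeQ4.Adj v x2 →
    hypercubeQ4.Adj x1 x2 → hypercubeQ4.Adj x2 x3 →
    x1 = x3 ∨ x3 = v ∨ x1 = v ∨ x2 = (fun _ => false) := by decide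

lemma key (u v x1 x2 x3 : Fin 4 → Bool) (huv : hypercubeQ4.Adj u v)
    (h1 : hypercubeQ4.Adj u x1) (h3 : hypercubeQ4.Adj u x3)
    (hv2 : hypercubeQ4.Adj v x2) (h12 : hypercubeQ4.Adj x1 x2)
    (h23 : hypercubeQ4.Adj x2 x3) :
    x1 = x3 ∨ x3 = v ∨ x1 = v ∨ x2 = u := by
  have h0 := key0 (trl u v) (trl u x1) (trl u x2) (trl u x3)
  rw [← trl_self u] at h0
  rw [adj_trl, adj_trl, adj_trl, adj_trl, adj_trl, adj_trl] at h0
  rcases h0 huv h1 h3 hv2 h12 h23 with h | h | h | h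
  · exact Or.inl (trl_inj u h)
  · exact Or.inr (Or.inl (trl_inj u h))
  · exact Or.inr (Or.inr (Or.inl (trl_inj u h)))
  · exact Or.inr (Or.inr (Or.inr (trl_inj u h)))

lemma count_par {a b : Fin 4 → Bool} (p : hypercubeQ4.Walk a b) :
    (p.support.filter fun x => par x = !par a).length = (p.length + 1) / 2 ∧
    (p.support.filter fun x => par x = par a).length = p.length / 2 + 1 := by
  induction p with
  | nil => simp
  | @cons a c b h q ih =>
    have hc : par c = !par a := adj_par _ _ h
    have hswap1 : (fun x => decide (par x = !par a)) = fun x => decide (par x = par c) := by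
      funext x; rw [hc]
    have hswap2 : (fun x => decide (par x = par a)) = fun x => decide (par x = !par c) := by
      funext x; rw [hc, Bool.not_not]
    have hna : ¬(par a = !par a) := by cases par a <;> simp
    have hpa : (par a = par a) := rfl
    constructor
    · rw [SimpleGraph.Walk.support_cons, List.filter_cons]
      simp only [hna, decide_false, Bool.false_eq_true, if_false]
      rw [hswap1, ih.2, SimpleGraph.Walk.length_cons]
      omega
    · rw [SimpleGraph.Walk.support_cons, List.filter_cons]
      simp only [hpa, decide_true]
      rw [if_pos trivial, List.length_cons, hswap2, ih.1, SimpleGraph.Walk.length_cons]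

lemma par_end {a b : Fin 4 → Bool} (p : hypercubeQ4.Walk a b) :
    (p.length % 2 = 0 → par b = par a) ∧ (p.length % 2 = 1 → par b = !par a) := by
  induction p with
  | nil => simp
  | @cons a c b h q ih =>
    have hc : par c = !par a := adj_par _ _ h
    rw [SimpleGraph.Walk.length_cons]
    constructor
    · intro he
      have : q.length % 2 = 1 := by omega
      rw [ih.2 this, hc, Bool.not_not]
    · intro he
      have : q.length % 2 = 0 := by omega
      rw [ih.1 this, hc]

lemma walk_head3 {u v : Fin 4 → Bool} (p : hypercubeQ4.Walk u v) (hp : p.IsPath)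
    (hl : p.length = 7) :
    ∃ x1 x2 x3, hypercubeQ4.Adj u x1 ∧ hypercubeQ4.Adj x1 x2 ∧ hypercubeQ4.Adj x2 x3 ∧
      x2 ∈ p.support ∧ x3 ∈ p.support ∧ x1 ≠ x3 ∧ x3 ≠ v ∧ x1 ≠ v ∧ x2 ≠ u := by
  cases p with
  | nil => simp at hl
  | @cons _ x1 _ h1 q1 =>
    cases q1 with
    | nil => simp at hl
    | @cons _ x2 _ h2 q2 =>
      cases q2 with
      | nil => simp at hl
      | @cons _ x3 _ h3 q3 =>
        cases q3 with
        | nil => simp at hl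
        | @cons _ x4 _ h4 r =>
          simp only [SimpleGraph.Walk.cons_isPath_iff, SimpleGraph.Walk.support_cons,
            List.mem_cons] at hp
          obtain ⟨⟨⟨⟨hr, hx3⟩, hx2⟩, hx1⟩, hu0⟩ := hp
          refine ⟨x1, x2, x3, h1, h2, h3, ?_, ?_, ?_, ?_, ?_, ?_⟩
          · simp [SimpleGraph.Walk.support_cons]
          · simp [SimpleGraph.Walk.support_cons]
          · intro h; exact hx1 (Or.inr (Or.inl h))
          · intro h
            exact hx3 (h ▸ SimpleGraph.Walk.end_mem_support r)
          · intro h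
            exact hx1 (Or.inr (Or.inr (h ▸ SimpleGraph.Walk.end_mem_support r)))
          · intro h
            exact hu0 (Or.inr (Or.inl h.symm))

/-- Every path in `Q₄` that cannot be extended at either end (every neighbor of each
endpoint already lies on the path) contains at least nine vertices. -/
theorem q4_maximal_path_long (u v : Fin 4 → Bool) (p : hypercubeQ4.Walk u v)
    (hp : p.IsPath)
    (hu : ∀ w, hypercubeQ4.Adj u w → w ∈ p.support)
    (hv : ∀ w, hypercubeQ4.Adj v w → w ∈ p.support) :
    9 ≤ p.support.length := by
  by_contra hcon
  push_neg at hcon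
  have hsup : p.support.length = p.length + 1 := SimpleGraph.Walk.length_support p
  have hcp := count_par p
  have hnodup : p.support.Nodup := hp.support_nodup
  have hsub1 : (Finset.univ.filter (hypercubeQ4.Adj u)) ⊆
      (p.support.filter fun x => par x = !par u).toFinset := by
    intro w hw
    rw [Finset.mem_filter] at hw
    rw [List.mem_toFinset, List.mem_filter]
    exact ⟨hu w hw.2, by simp [adj_par _ _ hw.2]⟩
  have hcard1 : ((p.support.filter fun x => par x = !par u).toFinset).card = (p.length + 1) / 2 := by
    rw [List.toFinset_card_of_nodup (hnodup.filter _), hcp.1]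
  have h4 : (4 : ℕ) ≤ (p.length + 1) / 2 := by
    have h := Finset.card_le_card hsub1
    rw [card_nbhd u, hcard1] at h
    exact h
  have hlen7 : p.length = 7 := by omega
  have hNu : (Finset.univ.filter (hypercubeQ4.Adj u)) =
      (p.support.filter fun x => par x = !par u).toFinset :=
    Finset.eq_of_subset_of_card_le hsub1 (by rw [hcard1, card_nbhd, hlen7])
  have hpv : par v = !par u := (par_end p).2 (by rw [hlen7])
  have hadjuv : hypercubeQ4.Adj u v := by
    have hvmem : v ∈ (p.support.filter fun x => par x = !par u).toFinset := by
      rw [List.mem_toFinset, List.mem_filter]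
      exact ⟨p.end_mem_support, by simp [hpv]⟩
    rw [← hNu, Finset.mem_filter] at hvmem
    exact hvmem.2
  have hsub2 : (Finset.univ.filter (hypercubeQ4.Adj v)) ⊆
      (p.support.filter fun x => par x = par u).toFinset := by
    intro w hw
    rw [Finset.mem_filter] at hw
    rw [List.mem_toFinset, List.mem_filter]
    refine ⟨hv w hw.2, ?_⟩
    have h := adj_par _ _ hw.2
    rw [hpv, Bool.not_not] at h
    simp [h]
  have hcard2 : ((p.support.filter fun x => par x = par u).toFinset).card = 4 := by
    rw [List.toFinset_card_of_nodup (hnodup.filter _), hcp.2, hlen7]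
  have hNv : (Finset.univ.filter (hypercubeQ4.Adj v)) =
      (p.support.filter fun x => par x = par u).toFinset :=
    Finset.eq_of_subset_of_card_le hsub2 (by rw [hcard2, card_nbhd])
  obtain ⟨x1, x2, x3, h1, h2, h3, hx2mem, hx3mem, hne13, hne3v, hne1v, hne2u⟩ :=
    walk_head3 p hp hlen7
  have hpar2 : par x2 = par u := by
    rw [adj_par _ _ h2, adj_par _ _ h1, Bool.not_not]
  have hadjvx2 : hypercubeQ4.Adj v x2 := by
    have hm : x2 ∈ (p.support.filter fun x => par x = par u).toFinset := by
      rw [List.mem_toFinset, List.mem_filter]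
      exact ⟨hx2mem, by simp [hpar2]⟩
    rw [← hNv, Finset.mem_filter] at hm
    exact hm.2
  have hpar3 : par x3 = !par u := by
    rw [adj_par _ _ h3, hpar2]
  have hadjux3 : hypercubeQ4.Adj u x3 := by
    have hm : x3 ∈ (p.support.filter fun x => par x = !par u).toFinset := by
      rw [List.mem_toFinset, List.mem_filter]
      exact ⟨hx3mem, by simp [hpar3]⟩
    rw [← hNu, Finset.mem_filter] at hm
    exact hm.2
  rcases key u v x1 x2 x3 hadjuv h1 hadjux3 hadjvx2 h2 h3 with h | h | h | h
  · exact hne13 h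
  · exact hne3v h
  · exact hne1v h
  · exact hne2u h
end

section
/- Let n ≥ 10, let N = M₁·M₂·M₃·M₄·M₂·M₄·M₁·M₂·M₃ (the product over the list ⟨1,2,3,4,2,4,1,2,3⟩), and let v ∈ ℝⁿ be the vector whose 2nd coordinate is 0 and whose every other coordinate is 1/(n−1) (the midpoint of a ridge of the standard simplex). Then every coordinate of N·v is strictly positive. -/
lemma reflMat_mulVec (n : ℕ) (a : Fin n) (x : Fin n → ℝ) (i : Fin n) :
    (reflMat n a).mulVec x i = if i = a then -x a else x i + 2/((n:ℝ)-1) * x a := by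
  simp only [Matrix.mulVec, dotProduct, reflMat]
  by_cases h : i = a
  · subst h
    rw [if_pos rfl, Finset.sum_eq_single i]
    · simp
    · intro j _ hj
      simp [hj, Ne.symm hj]
    · simp
  · rw [if_neg h, ← Finset.sum_subset (Finset.subset_univ ({i, a} : Finset (Fin n)))]
    · rw [Finset.sum_pair h]
      simp [h, Ne.symm h]
    · intro j _ hj
      simp only [Finset.mem_insert, Finset.mem_singleton, not_or] at hj
      simp [hj.1, hj.2, Ne.symm hj.1]

/-- A vector determined by its first four coordinates, constant elsewhere. -/
def vec4 (n : ℕ) (w0 w1 w2 w3 w4 : ℝ) : Fin n → ℝ := fun i =>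
  if (i:ℕ) = 0 then w0 else if (i:ℕ) = 1 then w1 else if (i:ℕ) = 2 then w2
    else if (i:ℕ) = 3 then w3 else w4

lemma step0 (n : ℕ) (hn : 10 ≤ n) (w0 w1 w2 w3 w4 : ℝ) :
    (reflMat n ⟨0, Nat.lt_of_lt_of_le (by norm_num) hn⟩).mulVec (vec4 n w0 w1 w2 w3 w4)
      = vec4 n (-w0) (w1 + 2/((n:ℝ)-1)*w0) (w2 + 2/((n:ℝ)-1)*w0)
          (w3 + 2/((n:ℝ)-1)*w0) (w4 + 2/((n:ℝ)-1)*w0) := by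
  funext i
  rw [reflMat_mulVec]
  simp only [vec4, Fin.ext_iff]
  split_ifs <;> first | rfl | (exact (by assumption : False).elim) | omega | ring

lemma step1 (n : ℕ) (hn : 10 ≤ n) (w0 w1 w2 w3 w4 : ℝ) :
    (reflMat n ⟨1, Nat.lt_of_lt_of_le (by norm_num) hn⟩).mulVec (vec4 n w0 w1 w2 w3 w4)
      = vec4 n (w0 + 2/((n:ℝ)-1)*w1) (-w1) (w2 + 2/((n:ℝ)-1)*w1)
          (w3 + 2/((n:ℝ)-1)*w1) (w4 + 2/((n:ℝ)-1)*w1) := by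
  funext i
  rw [reflMat_mulVec]
  simp only [vec4, Fin.ext_iff]
  split_ifs <;> first | rfl | (exact (by assumption : False).elim) | omega | ring

lemma step2 (n : ℕ) (hn : 10 ≤ n) (w0 w1 w2 w3 w4 : ℝ) :
    (reflMat n ⟨2, Nat.lt_of_lt_of_le (by norm_num) hn⟩).mulVec (vec4 n w0 w1 w2 w3 w4)
      = vec4 n (w0 + 2/((n:ℝ)-1)*w2) (w1 + 2/((n:ℝ)-1)*w2) (-w2)
          (w3 + 2/((n:ℝ)-1)*w2) (w4 + 2/((n:ℝ)-1)*w2) := by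
  funext i
  rw [reflMat_mulVec]
  simp only [vec4, Fin.ext_iff]
  split_ifs <;> first | rfl | (exact (by assumption : False).elim) | omega | ring

lemma step3 (n : ℕ) (hn : 10 ≤ n) (w0 w1 w2 w3 w4 : ℝ) :
    (reflMat n ⟨3, Nat.lt_of_lt_of_le (by norm_num) hn⟩).mulVec (vec4 n w0 w1 w2 w3 w4)
      = vec4 n (w0 + 2/((n:ℝ)-1)*w3) (w1 + 2/((n:ℝ)-1)*w3) (w2 + 2/((n:ℝ)-1)*w3)
          (-w3) (w4 + 2/((n:ℝ)-1)*w3) := by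
  funext i
  rw [reflMat_mulVec]
  simp only [vec4, Fin.ext_iff]
  split_ifs <;> first | rfl | (exact (by assumption : False).elim) | omega | ring

set_option maxHeartbeats 2000000 in
/-- For `n ≥ 10`, with `N = M₁M₂M₃M₄M₂M₄M₁M₂M₃` (the product over the list
`⟨1,2,3,4,2,4,1,2,3⟩`, written here 0-indexed) and `v` the midpoint of a ridge of the
standard simplex (2nd coordinate `0`, all others `1/(n-1)`), every coordinate of `N·v`
is strictly positive. -/
theorem orthoplex_overlap_coords_pos (n : ℕ) (hn : 10 ≤ n)
    (N : Matrix (Fin n) (Fin n) ℝ)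
    (hN : N = (([⟨0, by omega⟩, ⟨1, by omega⟩, ⟨2, by omega⟩, ⟨3, by omega⟩, ⟨1, by omega⟩,
        ⟨3, by omega⟩, ⟨0, by omega⟩, ⟨1, by omega⟩, ⟨2, by omega⟩] : List (Fin n)).map
        (reflMat n)).prod)
    (v : Fin n → ℝ)
    (hv : v = fun j : Fin n => if (j : ℕ) = 1 then 0 else 1 / ((n : ℝ) - 1)) :
    ∀ i : Fin n, 0 < N.mulVec v i := by
  have hn9 : (9:ℝ) ≤ (n:ℝ) - 1 := by
    have : (10:ℝ) ≤ (n:ℝ) := by exact_mod_cast hn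
    linarith
  obtain ⟨c, hc0, hc9, ht, hcv⟩ :
      ∃ c : ℝ, 0 < c ∧ c ≤ 1/9 ∧ 2/((n:ℝ)-1) = 2*c ∧ 1/((n:ℝ)-1) = c := by
    refine ⟨1/((n:ℝ)-1), by positivity, ?_, by ring, rfl⟩
    rw [div_le_div_iff₀ (by linarith) (by norm_num)]
    linarith
  have hv' : v = vec4 n c 0 c c c := by
    funext j
    rw [hv]
    simp only [vec4]
    split_ifs <;> first | omega | rw [hcv] | rfl
  intro i
  rw [hN, hv']
  simp only [List.map_cons, List.map_nil, List.prod_cons, List.prod_nil, mul_one,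
    ← Matrix.mulVec_mulVec]
  rw [step2 n hn, step1 n hn, step0 n hn, step3 n hn, step1 n hn, step3 n hn,
    step2 n hn, step1 n hn, step0 n hn, ht]
  have hp : ∀ k : ℕ, c^(k+1) ≤ c^k/9 := by
    intro k
    have h1 : c^k * c ≤ c^k * (1/9) :=
      mul_le_mul_of_nonneg_left hc9 (le_of_lt (pow_pos hc0 k))
    rw [pow_succ]
    linarith
  have q1 := hp 1; have q2 := hp 2; have q3 := hp 3; have q4 := hp 4
  have q5 := hp 5; have q6 := hp 6; have q7 := hp 7; have q8 := hp 8; have q9 := hp 9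
  have r2 := pow_pos hc0 2; have r3 := pow_pos hc0 3; have r4 := pow_pos hc0 4
  have r5 := pow_pos hc0 5; have r6 := pow_pos hc0 6; have r7 := pow_pos hc0 7
  have r8 := pow_pos hc0 8; have r9 := pow_pos hc0 9; have r10 := pow_pos hc0 10
  simp only [vec4]
  split_ifs <;> nlinarith [q1, q2, q3, q4, q5, q6, q7, q8, q9,
    r2, r3, r4, r5, r6, r7, r8, r9, r10, hc0]
end
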